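/- (Reflection symmetry of expansion coefficients, N = 3 case) In the canonical-word expansion Σ_{τ∈S₆} sgn(τ)[[A B_{τ(1)} B_{τ(2)}][B_{τ(3)} B_{τ(4)} B_{τ(5)}] B_{τ(6)}] = Σ_{n=0}^{6} (−1)^n m_n · Σ_{τ∈S₆} sgn(τ) B_{τ(1)}⋯B_{τ(n)} A B_{τ(n+1)}⋯B_{τ(6)}, the integer coefficients satisfy m_n = m_{6−n} for all 0 ≤ n ≤ 6 (concretely (m₀,...,m₆) = (24,36,36,24,36,36,24)). -/

import Mathlib

/-- The Nambu `n`-bracket: signed sum over all permutations of the ordered product. -/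
def nambu {R : Type*} [Ring R] {n : ℕ} (f : Fin n → R) : R :=
  ∑ σ : Equiv.Perm (Fin n), (Equiv.Perm.sign σ : ℤ) • (List.ofFn (f ∘ σ)).prod

/-- The expansion coefficients `(m₀,…,m₆) = (24,36,36,24,36,36,24)`. -/
def mCoef : ℕ → ℤ := fun n => if n = 0 ∨ n = 3 ∨ n = 6 then 24 else 36

/-! Antisymmetrizing over the `Bᵢ` sends a word in `A, B₀, …, B₅` that contains each `Bᵢ` once
to `±` the canonical sum with `A` in the same position. Under this antisymmetrization the inner
bracket `[B₂ B₃ B₄]` may be replaced by `3! • B₂B₃B₄` and `[A B₀ B₁]` by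
`2! • (AB₀B₁ - B₀AB₁ + B₀B₁A)`. Expanding the outer bracket over the six orders of the three
blocks `[A B₀ B₁]`, `B₂B₃B₄`, `B₅` then gives the coefficients `12 • (2, -3, 3, -2, 3, -3, 2)`,
which are symmetric. -/

open Equiv Equiv.Perm Finset

section Antisymmetrize

variable {ι M N : Type*} [Fintype ι] [DecidableEq ι] [AddCommGroup N]

def antisymmetrize (F : (ι → M) → N) (b : ι → M) : N :=
  ∑ τ : Perm ι, (sign τ : ℤ) • F (b ∘ τ)

theorem antisymmetrize_sum {α : Type*} (s : Finset α) (c : α → ℤ) (F : α → (ι → M) → N)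
    (b : ι → M) :
    antisymmetrize (fun b => ∑ i ∈ s, c i • F i b) b = ∑ i ∈ s, c i • antisymmetrize (F i) b := by
  simp only [antisymmetrize, smul_sum, smul_smul, mul_comm]
  exact sum_comm

theorem antisymmetrize_add (F G : (ι → M) → N) (b : ι → M) :
    antisymmetrize (fun b => F b + G b) b = antisymmetrize F b + antisymmetrize G b := by
  simp only [antisymmetrize, smul_add, sum_add_distrib]

theorem antisymmetrize_sub (F G : (ι → M) → N) (b : ι → M) :
    antisymmetrize (fun b => F b - G b) b = antisymmetrize F b - antisymmetrize G b := by
  simp only [antisymmetrize, smul_sub, sum_sub_distrib]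

theorem antisymmetrize_comp_perm (F : (ι → M) → N) (π : Perm ι) (b : ι → M) :
    antisymmetrize (fun b => F (b ∘ π)) b = (sign π : ℤ) • antisymmetrize F b := by
  rw [antisymmetrize, antisymmetrize, smul_sum]
  refine Fintype.sum_equiv (Equiv.mulRight π) _ _ fun τ => ?_
  rw [coe_mulRight, Perm.sign_mul, Units.val_mul, smul_smul, mul_left_comm, ← Units.val_mul,
    Int.units_mul_self, Units.val_one, mul_one]
  rfl

/- Each `σ : Perm κ` extends along `e` to a permutation of `ι` of the same sign that fixes
everything `Φ` looks at, so the outer antisymmetrization absorbs the inner one. -/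
theorem antisymmetrize_comp_antisymmetrize {κ N' : Type*} [Fintype κ] [DecidableEq κ]
    [AddCommGroup N'] (e : κ ↪ ι) (P : (κ → M) → N') (Φ : (ι → M) → N' → N)
    (hΦ_add : ∀ b y y', Φ b (y + y') = Φ b y + Φ b y')
    (hΦ_local : ∀ b b', (∀ i ∉ Set.range e, b i = b' i) → Φ b = Φ b') (b : ι → M) :
    antisymmetrize (fun b => Φ b (antisymmetrize P (b ∘ e))) b =
      (Fintype.card κ).factorial • antisymmetrize (fun b => Φ b (P (b ∘ e))) b := by
  have expand : ∀ b : ι → M, Φ b (antisymmetrize P (b ∘ e)) =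
      ∑ σ : Perm κ, (sign σ : ℤ) • Φ (b ∘ σ.viaFintypeEmbedding e)
        (P ((b ∘ σ.viaFintypeEmbedding e) ∘ e)) := by
    intro b
    let Ψ : N' →+ N := AddMonoidHom.mk' (Φ b) (hΦ_add b)
    change Ψ (antisymmetrize P (b ∘ e)) = _
    rw [antisymmetrize, map_sum]
    refine sum_congr rfl fun σ _ => ?_
    have hfix : ∀ i ∉ Set.range e, (b ∘ σ.viaFintypeEmbedding e) i = b i := fun i hi => by
      simp only [Function.comp_apply, viaFintypeEmbedding_apply_notMem_range _ _ hi]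
    have hcomp : (b ∘ σ.viaFintypeEmbedding e) ∘ e = (b ∘ e) ∘ σ := by
      funext a; simp only [Function.comp_apply, viaFintypeEmbedding_apply_image]
    rw [map_zsmul, hΦ_local _ b hfix, hcomp]
    rfl
  simp only [expand, antisymmetrize_sum, antisymmetrize_comp_perm (fun b => Φ b (P (b ∘ e))),
    viaFintypeEmbedding_sign, smul_smul, ← Units.val_mul, Int.units_mul_self, Units.val_one,
    one_smul, sum_const, card_univ, Fintype.card_perm]

end Antisymmetrize

section Ring

variable {R : Type*} [Ring R]

theorem nambu_eq_antisymmetrize {n : ℕ} (f : Fin n → R) :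
    nambu f = antisymmetrize (fun g => (List.ofFn g).prod) f := rfl

theorem univ_perm_fin_three : (univ : Finset (Perm (Fin 3))) =
    {1, swap 0 1, swap 0 2, swap 1 2, swap 0 1 * swap 1 2, swap 0 2 * swap 1 2} := by
  decide

theorem nambu_three (x y z : R) :
    nambu ![x, y, z] = x * y * z - x * z * y - y * x * z + y * z * x + z * x * y - z * y * x := by
  simp +decide [nambu, univ_perm_fin_three, sum_insert, List.ofFn_succ, swap_apply_of_ne_of_ne]
  noncomm_ring

def canonicalWord {n : ℕ} (A : R) (k : ℕ) (b : Fin n → R) : R :=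
  ((List.ofFn b).take k).prod * A * ((List.ofFn b).drop k).prod

/- After antisymmetrization in `b`, this is the word `b` with `b p, b (p + 1)` replaced by the
bracket `[A, b p, b (p + 1)]`. -/
def bracketWord {n : ℕ} (A : R) (p : ℕ) (b : Fin n → R) : R :=
  ∑ k ∈ range 3, (-1 : ℤ) ^ k • canonicalWord A (p + k) b

theorem nambu_three_eq_antisymmetrize_bracketWord (A x y : R) :
    nambu ![A, x, y] = antisymmetrize (bracketWord A 0) ![x, y] := by
  rw [nambu_three, antisymmetrize, show (univ : Finset (Perm (Fin 2))) = {1, swap 0 1} by decide]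
  simp +decide [bracketWord, canonicalWord, sum_range_succ, List.ofFn_succ]
  noncomm_ring

theorem antisymmetrize_bracketWord {n : ℕ} (A : R) (p : ℕ) (b : Fin n → R) :
    antisymmetrize (bracketWord A p) b =
      ∑ k ∈ range 3, (-1 : ℤ) ^ k • antisymmetrize (canonicalWord A (p + k)) b :=
  antisymmetrize_sum _ _ _ b

end Ring

namespace NestedBracket

variable {R : Type*} [Ring R]

theorem antisymmetrize_nested_nambu (A : R) (B : Fin 6 → R) :
    antisymmetrize (fun b => nambu ![nambu ![A, b 0, b 1], nambu ![b 2, b 3, b 4], b 5]) B =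
      12 • antisymmetrize
        (fun b => nambu ![bracketWord A 0 ![b 0, b 1], b 2 * b 3 * b 4, b 5]) B := by
  let e₁ : Fin 2 ↪ Fin 6 := ⟨![0, 1], by decide⟩
  let e₂ : Fin 3 ↪ Fin 6 := ⟨![2, 3, 4], by decide⟩
  have hY : ∀ b : Fin 6 → R,
      antisymmetrize (fun g => (List.ofFn g).prod) (b ∘ e₂) = nambu ![b 2, b 3, b 4] :=
    fun b => by
      rw [nambu_eq_antisymmetrize]
      congr 1; funext i; fin_cases i <;> rfl
  have middle := antisymmetrize_comp_antisymmetrize e₂ (fun g => (List.ofFn g).prod)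
    (fun b y => nambu ![nambu ![A, b 0, b 1], y, b 5])
    (fun b y y' => by simp only [nambu_three]; noncomm_ring)
    (fun b b' h => by funext y; simp only [h 0 (by decide), h 1 (by decide), h 5 (by decide)]) B
  have left := antisymmetrize_comp_antisymmetrize e₁ (bracketWord A 0)
    (fun b x => nambu ![x, b 2 * b 3 * b 4, b 5])
    (fun b x x' => by simp only [nambu_three]; noncomm_ring)
    (fun b b' h => by
      funext x; simp only [h 2 (by decide), h 3 (by decide), h 4 (by decide), h 5 (by decide)]) B
  have hYprod : ∀ b : Fin 6 → R, (List.ofFn (b ∘ e₂)).prod = b 2 * b 3 * b 4 := fun b => by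
    simp [List.ofFn_succ, e₂, mul_assoc]
  have hXvec : ∀ b : Fin 6 → R, b ∘ e₁ = ![b 0, b 1] := fun b => by
    funext i; fin_cases i <;> rfl
  simp only [hY, hYprod, hXvec, ← nambu_three_eq_antisymmetrize_bracketWord, Fintype.card_fin]
    at middle left
  rw [middle, left, smul_smul]
  rfl

/- `b ∘ permXZY` lists the letters of `b` in the block order `X Z Y`, where `X = (b 0, b 1)`,
`Y = (b 2, b 3, b 4)` and `Z = b 5`; similarly for the other names. -/
def permXZY : Perm (Fin 6) := ⟨![0, 1, 5, 2, 3, 4], ![0, 1, 3, 4, 5, 2], by decide, by decide⟩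
def permYXZ : Perm (Fin 6) := ⟨![2, 3, 4, 0, 1, 5], ![3, 4, 0, 1, 2, 5], by decide, by decide⟩
def permYZX : Perm (Fin 6) := ⟨![2, 3, 4, 5, 0, 1], ![4, 5, 0, 1, 2, 3], by decide, by decide⟩
def permZXY : Perm (Fin 6) := ⟨![5, 0, 1, 2, 3, 4], ![1, 2, 3, 4, 5, 0], by decide, by decide⟩
def permZYX : Perm (Fin 6) := ⟨![5, 2, 3, 4, 0, 1], ![4, 5, 1, 2, 3, 0], by decide, by decide⟩

theorem nambu_blocks_eq (A : R) (b : Fin 6 → R) :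
    nambu ![bracketWord A 0 ![b 0, b 1], b 2 * b 3 * b 4, b 5] =
      bracketWord A 0 b - bracketWord A 0 (b ∘ permXZY) - bracketWord A 3 (b ∘ permYXZ) +
        bracketWord A 4 (b ∘ permYZX) + bracketWord A 1 (b ∘ permZXY) -
        bracketWord A 4 (b ∘ permZYX) := by
  simp [nambu_three, bracketWord, canonicalWord, sum_range_succ, List.ofFn_succ, permXZY, permYXZ,
    permYZX, permZXY, permZYX]
  noncomm_ring

theorem antisymmetrize_nambu_blocks (A : R) (B : Fin 6 → R) :
    antisymmetrize (fun b => nambu ![bracketWord A 0 ![b 0, b 1], b 2 * b 3 * b 4, b 5]) B =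
      2 • antisymmetrize (canonicalWord A 0) B - 3 • antisymmetrize (canonicalWord A 1) B +
        3 • antisymmetrize (canonicalWord A 2) B - 2 • antisymmetrize (canonicalWord A 3) B +
        3 • antisymmetrize (canonicalWord A 4) B - 3 • antisymmetrize (canonicalWord A 5) B +
        2 • antisymmetrize (canonicalWord A 6) B := by
  simp only [nambu_blocks_eq, antisymmetrize_add, antisymmetrize_sub,
    antisymmetrize_comp_perm (bracketWord A _), antisymmetrize_bracketWord,
    show sign permXZY = -1 by decide, show sign permYXZ = 1 by decide,
    show sign permYZX = 1 by decide, show sign permZXY = -1 by decide,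
    show sign permZYX = -1 by decide, sum_range_succ, sum_range_zero]
  module

end NestedBracket

theorem reflection_symmetry_coefficients {R : Type*} [Ring R] (A : R) (B : Fin 6 → R) :
    (∑ τ : Equiv.Perm (Fin 6), (Equiv.Perm.sign τ : ℤ) •
        nambu ![nambu ![A, B (τ 0), B (τ 1)], nambu ![B (τ 2), B (τ 3), B (τ 4)], B (τ 5)] =
      ∑ n ∈ Finset.range 7, ((-1 : ℤ) ^ n * mCoef n) •
        ∑ τ : Equiv.Perm (Fin 6), (Equiv.Perm.sign τ : ℤ) •
          (((List.ofFn (B ∘ τ)).take n).prod * A * ((List.ofFn (B ∘ τ)).drop n).prod)) ∧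
    ∀ n ≤ 6, mCoef n = mCoef (6 - n) := by
  refine ⟨?_, by decide⟩
  change antisymmetrize (fun b => nambu ![nambu ![A, b 0, b 1], nambu ![b 2, b 3, b 4], b 5]) B =
    ∑ n ∈ range 7, ((-1 : ℤ) ^ n * mCoef n) • antisymmetrize (canonicalWord A n) B
  rw [NestedBracket.antisymmetrize_nested_nambu, NestedBracket.antisymmetrize_nambu_blocks]
  simp only [sum_range_succ, sum_range_zero, mCoef]
  norm_num
  noncomm_ring
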